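/- arXiv:2311.03064 — 2 statements merged into one kernel-verified Lean document; each statement's English description precedes it below -/
import Mathlib

section
/- Let X be a real Banach space, let A ⊆ X be a nonempty bounded convex set, and let a ∈ A. Then the following are equivalent: (i) a is an SCD point of A; (ii) there exists a sequence of nonempty relatively weakly open subsets of A that is determining for a; (iii) there exists a sequence of convex combinations of slices of A that is determining for a. -/
open Set Metric

variable {X : Type*} [NormedAddCommGroup X] [NormedSpace ℝ X]

/-- A slice of a bounded convex set `A`. -/
def IsSlice (A S : Set X) : Prop :=
  S.Nonempty ∧ ∃ (f : X →L[ℝ] ℝ) (α : ℝ), 0 < α ∧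
    S = {x | x ∈ A ∧ sSup (f '' A) - α < f x}

/-- `V` is a determining sequence for the point `a` of `A`. -/
def Determining (A : Set X) (V : ℕ → Set X) (a : X) : Prop :=
  ∀ B ⊆ A, (∀ n, (B ∩ V n).Nonempty) → a ∈ closure (convexHull ℝ B)

/-- `a` is a slicely countably determined point of `A`. -/
def SCDPoint (A : Set X) (a : X) : Prop :=
  a ∈ A ∧ ∃ V : ℕ → Set X, (∀ n, IsSlice A (V n)) ∧ Determining A V a

/-- `W` is a nonempty relatively weakly open subset of `A`. -/
def RelWeakOpen {X : Type*} [NormedAddCommGroup X] [NormedSpace ℝ X] (A W : Set X) : Prop :=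
  W.Nonempty ∧ ∃ U : Set (WeakSpace ℝ X), IsOpen U ∧ W = A ∩ (toWeakSpace ℝ X ⁻¹' U)

/-- `C` is a convex combination of (finitely many) slices of `A`. -/
def IsConvexCombOfSlices {X : Type*} [NormedAddCommGroup X] [NormedSpace ℝ X]
    (A C : Set X) : Prop :=
  ∃ (n : ℕ) (S : Fin n → Set X) (l : Fin n → ℝ),
    (∀ i, IsSlice A (S i)) ∧ (∀ i, 0 ≤ l i) ∧ ∑ i, l i = 1 ∧
    C = {x | ∃ y : Fin n → X, (∀ i, y i ∈ S i) ∧ x = ∑ i, l i • y i}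

/- A relatively weakly open set is pulled back from an open set of a Euclidean space by finitely
many functionals. There, Straszewicz's theorem (a farthest point of a compact set from a far-away
centre is exposed, and the exposed points of a compact set have dense convex hull) puts a convex
combination of exposed points inside the open set. Compactness makes every exposed point strongly
exposed, so small slices around those points combine into a subset of the open set.
Conversely, the countably many slices occurring in a determining sequence of convex combinations
of slices are determining: a set meeting all of them has a convex hull meeting every combination. -/

open Bornology

/-- The slice `S(A, f, α)`. -/
def slice (A : Set X) (f : X →L[ℝ] ℝ) (α : ℝ) : Set X :=
  {x | x ∈ A ∧ sSup (f '' A) - α < f x}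

theorem isSlice_slice {A : Set X} (hA : A.Nonempty) (f : X →L[ℝ] ℝ) {α : ℝ} (hα : 0 < α) :
    IsSlice A (slice A f α) := by
  refine ⟨?_, f, α, hα, rfl⟩
  obtain ⟨_, ⟨x, hxA, rfl⟩, hx⟩ := exists_lt_of_lt_csSup (hA.image f) (sub_lt_self _ hα)
  exact ⟨x, hxA, hx⟩

theorem isSlice_self {A : Set X} (hA : A.Nonempty) : IsSlice A A := by
  convert isSlice_slice hA 0 one_pos
  ext x
  simp [slice, hA.image_const]

theorem IsSlice.relWeakOpen {A S : Set X} (hS : IsSlice A S) : RelWeakOpen A S := by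
  obtain ⟨hne, f, α, -, rfl⟩ := hS
  exact ⟨hne, {z | sSup (f '' A) - α < (topDualPairing ℝ X).flip z f},
    isOpen_lt continuous_const (WeakBilin.eval_continuous _ f), rfl⟩

theorem Determining.mono {A : Set X} {V W : ℕ → Set X} {a : X} (hV : Determining A V a)
    (hWV : ∀ n, W n ⊆ V n) : Determining A W a :=
  fun B hBA hB => hV B hBA fun n => (hB n).mono (inter_subset_inter_right B (hWV n))

theorem IsCompact.exists_slice_subset_ball {E : Type*} [PseudoMetricSpace E] {K : Set E}
    (hK : IsCompact K) {l : E → ℝ} (hl : Continuous l) {e : E}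
    (hmax : ∀ y ∈ K, l y ≤ l e ∧ (l e ≤ l y → y = e)) {δ : ℝ} (hδ : 0 < δ) :
    ∃ α > 0, ∀ y ∈ K, l e - α < l y → dist y e < δ := by
  obtain hfar | hfar := (K \ ball e δ).eq_empty_or_nonempty
  · exact ⟨1, one_pos, fun y hy _ => by_contra fun h => hfar.subset ⟨hy, h⟩⟩
  obtain ⟨y₀, ⟨hy₀K, hy₀⟩, hy₀max⟩ := (hK.diff isOpen_ball).exists_isMaxOn hfar hl.continuousOn
  have hlt : l y₀ < l e := (hmax y₀ hy₀K).1.lt_of_not_ge fun h =>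
    hy₀ ((hmax y₀ hy₀K).2 h ▸ mem_ball_self hδ)
  refine ⟨l e - l y₀, sub_pos.2 hlt, fun y hy hly => by_contra fun h => ?_⟩
  have : l y ≤ l y₀ := hy₀max ⟨hy, h⟩
  linarith

theorem csSup_image_eq_of_mem_closure {E : Type*} [TopologicalSpace E] {K : Set E} {l : E → ℝ}
    (hl : Continuous l) {e : E} (he : e ∈ closure K) (hmax : ∀ y ∈ K, l y ≤ l e) :
    sSup (l '' K) = l e :=
  (isLUB_of_mem_closure (forall_mem_image.2 hmax)
    (image_closure_subset_closure_image hl ⟨e, he, rfl⟩)).csSup_eq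
    ((closure_nonempty_iff.1 ⟨e, he⟩).image l)

section Hilbert

open scoped InnerProductSpace

variable {F : Type*} [NormedAddCommGroup F] [InnerProductSpace ℝ F]

theorem mem_exposedPoints_of_forall_dist_le {K : Set F} {c e : F} (he : e ∈ K)
    (hmax : ∀ y ∈ K, dist y c ≤ dist e c) : e ∈ K.exposedPoints ℝ := by
  refine ⟨he, innerSL ℝ (e - c), fun y hy => ?_⟩
  have hsq : ‖y - c‖ ^ 2 = ‖y - e‖ ^ 2 + 2 * ⟪y - e, e - c⟫_ℝ + ‖e - c‖ ^ 2 := by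
    rw [← norm_add_sq_real, sub_add_sub_cancel]
  have hle : ‖y - c‖ ^ 2 ≤ ‖e - c‖ ^ 2 := by
    have := hmax y hy
    rw [dist_eq_norm, dist_eq_norm] at this
    gcongr
  have hinner : innerSL ℝ (e - c) y - innerSL ℝ (e - c) e = ⟪y - e, e - c⟫_ℝ := by
    rw [innerSL_apply_apply, innerSL_apply_apply, ← inner_sub_right, real_inner_comm]
  refine ⟨by nlinarith [sq_nonneg ‖y - e‖], fun h => ?_⟩
  exact sub_eq_zero.1 (norm_le_zero_iff.1 (by nlinarith [norm_nonneg (y - e)]))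

theorem IsCompact.subset_closure_convexHull_exposedPoints [CompleteSpace F] {K : Set F}
    (hK : IsCompact K) : K ⊆ closure (convexHull ℝ (K.exposedPoints ℝ)) := by
  intro e he
  by_contra hne
  obtain ⟨f, u, hfu, hue⟩ := geometric_hahn_banach_closed_point
    (convex_convexHull ℝ _).closure isClosed_closure hne
  set v := (InnerProductSpace.toDual ℝ F).symm f
  obtain ⟨D, hD⟩ := (isBounded_iff_subset_closedBall e).1 hK.isBounded
  have hγ : 0 < f e - u := sub_pos.2 hue
  set R := (D ^ 2 + 1) / (2 * (f e - u))
  have hR : 2 * R * (f e - u) = D ^ 2 + 1 := by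
    simp only [R]
    field_simp
  set c := e - R • v
  -- Seen from the far-away centre `c`, the points of `K` in the half-space `f ≤ u` are all
  -- closer than `e`.
  have hcloser : ∀ x ∈ K, f x ≤ u → dist x c < dist e c := by
    intro x hx hfx
    have hsq : ‖x - c‖ ^ 2 = ‖x - e‖ ^ 2 + 2 * (R * (f x - f e)) + ‖e - c‖ ^ 2 := by
      rw [show x - c = (x - e) + (e - c) by abel, norm_add_sq_real, show e - c = R • v by
        simp [c], real_inner_smul_right, real_inner_comm, inner_sub_right,
        InnerProductSpace.toDual_symm_apply, InnerProductSpace.toDual_symm_apply]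
    have hxe : ‖x - e‖ ^ 2 ≤ D ^ 2 := by
      have := mem_closedBall_iff_norm.1 (hD hx)
      gcongr
    have hRpos : 0 < R := by positivity
    rw [dist_eq_norm, dist_eq_norm, ← sq_lt_sq₀ (norm_nonneg _) (norm_nonneg _), hsq]
    nlinarith
  obtain ⟨x, hxK, hxmax⟩ :=
    hK.exists_isMaxOn ⟨e, he⟩ (continuous_id.dist continuous_const).continuousOn
  have hx : x ∈ K.exposedPoints ℝ := mem_exposedPoints_of_forall_dist_le hxK fun y hy => hxmax hy
  have := hcloser x hxK (hfu x (subset_closure (subset_convexHull ℝ _ hx))).le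
  exact (hxmax he).not_gt this

theorem exists_sum_smul_mem_of_forall_mem_slice [CompleteSpace F] {K U : Set F}
    (hK : IsCompact (closure K)) (hU : IsOpen U) (hKU : (K ∩ U).Nonempty) :
    ∃ (ι : Type) (_ : Fintype ι) (g : ι → F →L[ℝ] ℝ) (α μ : ι → ℝ),
      (∀ i, 0 < α i) ∧ (∀ i, 0 ≤ μ i) ∧ ∑ i, μ i = 1 ∧
      ∀ y : ι → F, (∀ i, y i ∈ slice K (g i) (α i)) → ∑ i, μ i • y i ∈ U := by
  obtain ⟨z₀, hz₀K, hz₀U⟩ := hKU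
  obtain ⟨z, hzU, hz⟩ := mem_closure_iff.1
    (hK.subset_closure_convexHull_exposedPoints (subset_closure hz₀K)) U hU hz₀U
  obtain ⟨δ, hδ, hball⟩ := Metric.isOpen_iff.1 hU z hzU
  obtain ⟨ι, _, μ, p, hμ0, hμ1, hp, rfl⟩ := mem_convexHull_iff_exists_fintype.1 hz
  choose hpK l hl using hp
  choose α hα hαδ using fun i => hK.exists_slice_subset_ball (l i).continuous (hl i) hδ
  refine ⟨ι, inferInstance, l, α, μ, hα, hμ0, hμ1, fun y hy => hball ?_⟩
  have hnear : ∀ i, y i - p i ∈ ball (0 : F) δ := fun i => by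
    have hsup := csSup_image_eq_of_mem_closure (l i).continuous (hpK i)
      fun x hx => (hl i x (subset_closure hx)).1
    rw [mem_ball_zero_iff, ← dist_eq_norm]
    exact hαδ i (y i) (subset_closure (hy i).1) (hsup ▸ (hy i).2)
  have := (convex_ball (0 : F) δ).sum_mem (fun i _ => hμ0 i) hμ1 fun i _ => hnear i
  rw [mem_ball, dist_eq_norm, ← Finset.sum_sub_distrib]
  simpa only [smul_sub, mem_ball_zero_iff] using this

end Hilbert

theorem isConvexCombOfSlices_of_fintype {ι : Type*} [Fintype ι] {A : Set X} {S : ι → Set X}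
    {l : ι → ℝ} (hS : ∀ i, IsSlice A (S i)) (hl0 : ∀ i, 0 ≤ l i) (hl1 : ∑ i, l i = 1) :
    IsConvexCombOfSlices A {x | ∃ y : ι → X, (∀ i, y i ∈ S i) ∧ x = ∑ i, l i • y i} := by
  set σ := (Fintype.equivFin ι).symm
  refine ⟨_, S ∘ σ, l ∘ σ, fun i => hS _, fun i => hl0 _, (σ.sum_comp l).trans hl1, ?_⟩
  ext x
  constructor
  · rintro ⟨y, hy, rfl⟩
    exact ⟨y ∘ σ, fun i => hy _, (σ.sum_comp fun i => l i • y i).symm⟩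
  · rintro ⟨y, hy, rfl⟩
    refine ⟨y ∘ σ.symm, fun i => by simpa using hy (σ.symm i), ?_⟩
    rw [← σ.sum_comp]
    simp

theorem mapsTo_slice_comp {Y : Type*} [NormedAddCommGroup Y] [NormedSpace ℝ Y] {A : Set X}
    (Φ : X →L[ℝ] Y) (g : Y →L[ℝ] ℝ) (α : ℝ) :
    MapsTo Φ (slice A (g.comp Φ) α) (slice (Φ '' A) g α) := by
  rintro x ⟨hxA, hx⟩
  refine ⟨mem_image_of_mem Φ hxA, ?_⟩
  rwa [ContinuousLinearMap.coe_comp, image_comp] at hx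

theorem exists_euclidean_preimage_subset_of_isOpen {U : Set (WeakSpace ℝ X)} (hU : IsOpen U)
    {x₀ : X} (hx₀ : toWeakSpace ℝ X x₀ ∈ U) :
    ∃ (I : Finset (X →L[ℝ] ℝ)) (Φ : X →L[ℝ] EuclideanSpace ℝ I) (U' : Set (EuclideanSpace ℝ I)),
      IsOpen U' ∧ Φ x₀ ∈ U' ∧ Φ ⁻¹' U' ⊆ toWeakSpace ℝ X ⁻¹' U := by
  obtain ⟨V, hV, rfl⟩ := isOpen_induced_iff.1 hU
  obtain ⟨I, u, hu, hIu⟩ := isOpen_pi_iff.1 hV _ hx₀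
  refine ⟨I, (PiLp.continuousLinearEquiv 2 ℝ fun _ : I => ℝ).symm.toContinuousLinearMap.comp
      (ContinuousLinearMap.pi fun f : I => (f : X →L[ℝ] ℝ)),
    ⋂ f : I, EuclideanSpace.proj f ⁻¹' u f,
    isOpen_iInter_of_finite fun f => (hu f f.2).1.preimage (EuclideanSpace.proj f).continuous,
    mem_iInter.2 fun f => (hu f f.2).2, fun x hx => hIu fun f hf => mem_iInter.1 hx ⟨f, hf⟩⟩

theorem RelWeakOpen.exists_isConvexCombOfSlices_subset {A W : Set X} (hAb : IsBounded A)
    (hAc : Convex ℝ A) (hW : RelWeakOpen A W) :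
    ∃ C, IsConvexCombOfSlices A C ∧ C ⊆ W := by
  obtain ⟨⟨x₀, hx₀⟩, U, hU, rfl⟩ := hW
  obtain ⟨hx₀A, hx₀U⟩ := hx₀
  obtain ⟨I, Φ, U', hU', hx₀U', hΦU⟩ := exists_euclidean_preimage_subset_of_isOpen hU hx₀U
  obtain ⟨ι, _, g, α, μ, hα, hμ0, hμ1, hgU⟩ := exists_sum_smul_mem_of_forall_mem_slice
    (Φ.lipschitz.isBounded_image hAb).isCompact_closure hU' ⟨Φ x₀, mem_image_of_mem Φ hx₀A, hx₀U'⟩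
  refine ⟨_, isConvexCombOfSlices_of_fintype (fun i => isSlice_slice ⟨x₀, hx₀A⟩ ((g i).comp Φ)
    (hα i)) hμ0 hμ1, ?_⟩
  rintro _ ⟨y, hy, rfl⟩
  refine ⟨hAc.sum_mem (fun i _ => hμ0 i) hμ1 fun i _ => (hy i).1, hΦU ?_⟩
  rw [mem_preimage, map_sum]
  simp only [map_smul]
  exact hgU _ fun i => mapsTo_slice_comp Φ (g i) (α i) (hy i)

theorem exists_isSlice_determining_of_countable {ι : Type*} [Countable ι] {A : Set X}
    (hA : A.Nonempty) {V : ι → Set X} (hV : ∀ i, IsSlice A (V i)) {a : X}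
    (hdet : ∀ B ⊆ A, (∀ i, (B ∩ V i).Nonempty) → a ∈ closure (convexHull ℝ B)) :
    ∃ W : ℕ → Set X, (∀ n, IsSlice A (W n)) ∧ Determining A W a := by
  obtain ⟨e, he⟩ := exists_surjective_nat (Option ι)
  refine ⟨fun n => (e n).elim A V, fun n => ?_, fun B hBA hB => hdet B hBA fun i => ?_⟩
  · dsimp only
    cases e n with
    | none => exact isSlice_self hA
    | some i => exact hV i
  · obtain ⟨n, hn⟩ := he (some i)
    simpa [hn] using hB n

theorem convexHull_inter_sum_smul_nonempty {E ι : Type*} [AddCommGroup E] [Module ℝ E]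
    [Fintype ι] {B : Set E} {S : ι → Set E} {l : ι → ℝ} (hl0 : ∀ i, 0 ≤ l i) (hl1 : ∑ i, l i = 1)
    (hB : ∀ i, (B ∩ S i).Nonempty) :
    (convexHull ℝ B ∩ {x | ∃ y : ι → E, (∀ i, y i ∈ S i) ∧ x = ∑ i, l i • y i}).Nonempty := by
  choose y hyB hyS using hB
  exact ⟨∑ i, l i • y i, (convex_convexHull ℝ B).sum_mem (fun i _ => hl0 i) hl1
    (fun i _ => subset_convexHull ℝ B (hyB i)), y, hyS, rfl⟩

theorem scdPoint_of_determining_isConvexCombOfSlices {A : Set X} (hAc : Convex ℝ A) {a : X}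
    (ha : a ∈ A) {C : ℕ → Set X} (hC : ∀ n, IsConvexCombOfSlices A (C n))
    (hdet : Determining A C a) : SCDPoint A a := by
  choose m S l hS hl0 hl1 hCS using hC
  refine ⟨ha, exists_isSlice_determining_of_countable ⟨a, ha⟩
    (V := fun p : Σ n, Fin (m n) => S p.1 p.2) (fun p => hS _ _) fun B hBA hB => ?_⟩
  have hmeet : ∀ n, (convexHull ℝ B ∩ C n).Nonempty := fun n =>
    hCS n ▸ convexHull_inter_sum_smul_nonempty (hl0 n) (hl1 n) fun i => hB ⟨n, i⟩
  simpa only [(convex_convexHull ℝ B).convexHull_eq] using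
    hdet _ (convexHull_min hBA hAc) hmeet

theorem stmt5_general {X : Type*} [NormedAddCommGroup X] [NormedSpace ℝ X]
    (A : Set X) (hAb : Bornology.IsBounded A) (hAc : Convex ℝ A)
    (a : X) (ha : a ∈ A) :
    (SCDPoint A a ↔
      ∃ W : ℕ → Set X, (∀ n, RelWeakOpen A (W n)) ∧ Determining A W a) ∧
    (SCDPoint A a ↔
      ∃ C : ℕ → Set X, (∀ n, IsConvexCombOfSlices A (C n)) ∧ Determining A C a) := by
  have h12 : SCDPoint A a → ∃ W : ℕ → Set X, (∀ n, RelWeakOpen A (W n)) ∧ Determining A W a :=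
    fun ⟨_, V, hV, hdet⟩ => ⟨V, fun n => (hV n).relWeakOpen, hdet⟩
  have h23 : (∃ W : ℕ → Set X, (∀ n, RelWeakOpen A (W n)) ∧ Determining A W a) →
      ∃ C : ℕ → Set X, (∀ n, IsConvexCombOfSlices A (C n)) ∧ Determining A C a := by
    rintro ⟨W, hW, hdet⟩
    choose C hC hCW using fun n => (hW n).exists_isConvexCombOfSlices_subset hAb hAc
    exact ⟨C, hC, hdet.mono hCW⟩
  have h31 : (∃ C : ℕ → Set X, (∀ n, IsConvexCombOfSlices A (C n)) ∧ Determining A C a) →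
      SCDPoint A a :=
    fun ⟨_, hC, hdet⟩ => scdPoint_of_determining_isConvexCombOfSlices hAc ha hC hdet
  exact ⟨⟨h12, h31 ∘ h23⟩, ⟨h23 ∘ h12, h31⟩⟩

/-- `a` is an SCD point of `A` iff there is a determining sequence of
nonempty relatively weakly open subsets of `A` iff there is a determining sequence of
convex combinations of slices of `A`. -/
theorem stmt5 {X : Type*} [NormedAddCommGroup X] [NormedSpace ℝ X] [CompleteSpace X]
    (A : Set X) (hA : A.Nonempty) (hAb : Bornology.IsBounded A) (hAc : Convex ℝ A)
    (a : X) (ha : a ∈ A) :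
    (SCDPoint A a ↔
      ∃ W : ℕ → Set X, (∀ n, RelWeakOpen A (W n)) ∧ Determining A W a) ∧
    (SCDPoint A a ↔
      ∃ C : ℕ → Set X, (∀ n, IsConvexCombOfSlices A (C n)) ∧ Determining A C a) :=
  stmt5_general A hAb hAc a ha
end

section
/- Let E and Y be real Banach spaces with E having the Daugavet property, let 1 < p < ∞, and let X = E ⊕_p Y with norm ‖(e,y)‖ = (‖e‖^p + ‖y‖^p)^{1/p}. If (a,b) is an SCD point of B_X, then a = 0. -/
open Set Metric

variable {X : Type*} [NormedAddCommGroup X] [NormedSpace ℝ X]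

/-- `X` has the Daugavet property: every rank-one bounded linear operator `T : X → X`
satisfies `‖Id + T‖ = 1 + ‖T‖`. -/
def DaugavetProperty (X : Type*) [NormedAddCommGroup X] [NormedSpace ℝ X] : Prop :=
  ∀ T : X →L[ℝ] X, (∃ (f : X →L[ℝ] ℝ) (y : X), f ≠ 0 ∧ y ≠ 0 ∧ T = f.smulRight y) →
    ‖ContinuousLinearMap.id ℝ X + T‖ = 1 + ‖T‖

/-!
Suppose `a ≠ 0`, let `V n` be slices of `B_X` determining for `(a, b)` and put `ε = ‖a‖ / 4`.
Inside a slice of `B_X` one may move the `E`-coordinate freely within the ball of its current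
radius, and there the Daugavet property provides points `e` that are almost aligned with any
given `w`, i.e. `‖e + w‖ ≈ ‖e‖ + ‖w‖`. Choosing recursively `x n ∈ V n` almost aligned with
`-a + ∑ i < n, (x i).fst`, with losses `ε / 2 ^ (n + 1)`, the partial sums stay almost additive,
so a norming functional `g` of `-a + ∑ i < n, (x i).fst` nearly norms each summand:
`g (-a) ≥ ‖a‖ - ε` and `g (x i).fst ≥ -ε`. Hence every convex combination of
`x 0, …, x (n - 1)` lies at distance at least `‖a‖ / 2` from `(a, b)`, while `(a, b)` lies in
the closed convex hull of `range x`.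
-/

section NormedSpace

variable {E : Type*} [NormedAddCommGroup E] [NormedSpace ℝ E]

theorem ContinuousLinearMap.apply_le_norm_of_opNorm_le_one {g : StrongDual ℝ E} (hg : ‖g‖ ≤ 1)
    (x : E) : g x ≤ ‖x‖ :=
  (le_abs_self _).trans <| by simpa using g.le_of_opNorm_le hg x

theorem mul_norm_add_sub_one_le_norm_smul_add_smul {x y : E} (hx : ‖x‖ ≤ 1) (hy : ‖y‖ ≤ 1)
    {s t : ℝ} (hs : 0 ≤ s) (ht : 0 ≤ t) : (s + t) * (‖x + y‖ - 1) ≤ ‖s • x + t • y‖ := by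
  set m := max s t
  have hm : 0 ≤ m := hs.trans (le_max_left s t)
  have hms : 0 ≤ m - s := sub_nonneg.2 (le_max_left s t)
  have hmt : 0 ≤ m - t := sub_nonneg.2 (le_max_right s t)
  have hxy : ‖x + y‖ ≤ 2 := (norm_add_le x y).trans (by linarith)
  have key : m * ‖x + y‖ ≤ ‖s • x + t • y‖ + (m - s) + (m - t) :=
    calc m * ‖x + y‖ = ‖(s • x + t • y) + ((m - s) • x + (m - t) • y)‖ := by
          rw [← norm_smul_of_nonneg hm]; congr 1; module
      _ ≤ ‖s • x + t • y‖ + (‖(m - s) • x‖ + ‖(m - t) • y‖) :=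
          (norm_add_le _ _).trans (add_le_add_right (norm_add_le _ _) _)
      _ ≤ ‖s • x + t • y‖ + ((m - s) * 1 + (m - t) * 1) := by
          rw [norm_smul_of_nonneg hms, norm_smul_of_nonneg hmt]; gcongr
      _ = _ := by ring
  have hm_le : m ≤ s + t := max_le (by linarith) (by linarith)
  nlinarith [mul_nonneg (sub_nonneg.2 hm_le) (sub_nonneg.2 hxy)]

theorem exists_dual_almost_norming_of_norm_add_sum_ge {ι : Type*} (s : Finset ι) (u : E)
    (v : ι → E) {ε : ℝ} (h : ‖u‖ + ∑ i ∈ s, ‖v i‖ - ε ≤ ‖u + ∑ i ∈ s, v i‖) :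
    ∃ g : StrongDual ℝ E, ‖g‖ ≤ 1 ∧ ‖u‖ - ε ≤ g u ∧ ∀ i ∈ s, ‖v i‖ - ε ≤ g (v i) := by
  obtain ⟨g, hg, hgu⟩ := exists_dual_vector'' ℝ (u + ∑ i ∈ s, v i)
  have hle := g.apply_le_norm_of_opNorm_le_one hg
  have hgap : (‖u‖ - g u) + ∑ i ∈ s, (‖v i‖ - g (v i)) ≤ ε := by
    simp only [map_add, map_sum, RCLike.ofReal_real_eq_id, id] at hgu
    rw [Finset.sum_sub_distrib]
    linarith
  have hgap_nonneg : ∀ i ∈ s, 0 ≤ ‖v i‖ - g (v i) := fun i _ => sub_nonneg.2 (hle _)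
  have hsum_nonneg := Finset.sum_nonneg hgap_nonneg
  refine ⟨g, hg, by linarith [hle u], fun i hi => ?_⟩
  linarith [Finset.single_le_sum hgap_nonneg hi, hle u]

theorem convexHull_range_subset_iUnion (x : ℕ → E) :
    convexHull ℝ (range x) ⊆ ⋃ n, convexHull ℝ (x '' Iio n) := by
  refine convexHull_min ?_ ((Monotone.directed_le fun m n hmn => ?_).convex_iUnion
    fun n => convex_convexHull ℝ _)
  · rintro _ ⟨n, rfl⟩
    exact mem_iUnion.2 ⟨n + 1, subset_convexHull ℝ _ ⟨n, by simp, rfl⟩⟩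
  · exact convexHull_mono (image_mono (Iio_subset_Iio hmn))

theorem notMem_closure_convexHull_range (x : ℕ → E) (v : E) {r : ℝ} (hr : 0 < r)
    (h : ∀ n, ∃ Φ : StrongDual ℝ E, ‖Φ‖ ≤ 1 ∧ ∀ i < n, Φ v + r ≤ Φ (x i)) :
    v ∉ closure (convexHull ℝ (range x)) := by
  have hfar : ∀ z ∈ convexHull ℝ (range x), r ≤ dist z v := by
    intro z hz
    obtain ⟨n, hzn⟩ := mem_iUnion.1 (convexHull_range_subset_iUnion x hz)
    obtain ⟨Φ, hΦ, hΦx⟩ := h n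
    have hzΦ : Φ v + r ≤ Φ z := by
      refine convexHull_min ?_ (convex_halfSpace_ge Φ.isLinear _) hzn
      rintro _ ⟨i, hi, rfl⟩
      exact hΦx i hi
    calc r ≤ Φ (z - v) := by rw [map_sub]; linarith
      _ ≤ dist z v := by rw [dist_eq_norm]; exact Φ.apply_le_norm_of_opNorm_le_one hΦ _
  intro hv
  obtain ⟨z, hz, hzv⟩ := Metric.mem_closure_iff.1 hv r hr
  linarith [hfar z hz, dist_comm v z]

end NormedSpace

theorem exists_seq_norm_add_sum_ge {E α : Type*} [SeminormedAddCommGroup E] (V : ℕ → Set α)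
    (f : α → E) (hV : ∀ n (w : E), ∀ δ > 0, ∃ x ∈ V n, ‖f x‖ + ‖w‖ - δ < ‖f x + w‖)
    (u : E) {ε : ℝ} (hε : 0 < ε) :
    ∃ x : ℕ → α, (∀ n, x n ∈ V n) ∧
      ∀ n, ‖u‖ + ∑ i ∈ Finset.range n, ‖f (x i)‖ - ε ≤ ‖u + ∑ i ∈ Finset.range n, f (x i)‖ := by
  choose next hnext_mem hnext using fun n (w : E) => hV n w (ε / 2 ^ (n + 1)) (by positivity)
  let W : ℕ → E := fun n => Nat.rec u (fun k w => w + f (next k w)) n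
  have hW : ∀ n, W n = u + ∑ i ∈ Finset.range n, f (next i (W i)) := by
    intro n
    induction n with
    | zero => simp [W]
    | succ n ih => rw [Finset.sum_range_succ, ← add_assoc, ← ih]
  have hgain : ∀ n,
      ‖u‖ + ∑ i ∈ Finset.range n, ‖f (next i (W i))‖ - ε * (1 - 1 / 2 ^ n) ≤ ‖W n‖ := by
    intro n
    induction n with
    | zero => simp [W]
    | succ n ih =>
      have hstep := hnext n (W n)
      have hWsucc : W (n + 1) = f (next n (W n)) + W n := add_comm _ _
      have hloss : ε * (1 - 1 / 2 ^ n) + ε / 2 ^ (n + 1) = ε * (1 - 1 / 2 ^ (n + 1)) := by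
        rw [pow_succ]; field_simp; ring
      rw [Finset.sum_range_succ, hWsucc]
      linarith
  refine ⟨fun n => next n (W n), fun n => hnext_mem n _, fun n => ?_⟩
  have hloss_le : ε * (1 - 1 / 2 ^ n) ≤ ε :=
    mul_le_of_le_one_right hε.le (sub_le_self _ (by positivity))
  rw [← hW]
  linarith [hgain n]

theorem WithLp.prod_norm_le_of_norm_le {p : ENNReal} [Fact (1 ≤ p)] {α β : Type*}
    [SeminormedAddCommGroup α] [SeminormedAddCommGroup β] {x y : WithLp p (α × β)}
    (hfst : ‖x.fst‖ ≤ ‖y.fst‖) (hsnd : ‖x.snd‖ ≤ ‖y.snd‖) : ‖x‖ ≤ ‖y‖ := by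
  rcases p.dichotomy with rfl | hp
  · rw [prod_norm_eq_sup, prod_norm_eq_sup]
    exact sup_le_sup hfst hsnd
  · have hp0 : 0 < p.toReal := zero_lt_one.trans_le hp
    rw [prod_norm_eq_add hp0, prod_norm_eq_add hp0]
    gcongr

theorem WithLp.norm_fstL_le_one {p : ENNReal} [Fact (1 ≤ p)] {α β : Type*}
    [SeminormedAddCommGroup α] [SeminormedAddCommGroup β] [NormedSpace ℝ α] [NormedSpace ℝ β] :
    ‖WithLp.fstL p ℝ α β‖ ≤ 1 :=
  ContinuousLinearMap.opNorm_le_bound _ zero_le_one fun z => by simpa using norm_fst_le _ z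

theorem IsSlice.subset {A S : Set X} (hS : IsSlice A S) : S ⊆ A := by
  obtain ⟨-, f, α, -, rfl⟩ := hS
  exact fun x hx => hx.1

namespace DaugavetProperty

variable {E : Type*} [NormedAddCommGroup E] [NormedSpace ℝ E]

theorem exists_norm_add_gt_two_sub (hE : DaugavetProperty E) (ψ : StrongDual ℝ E) {t : ℝ}
    (ht : t < ‖ψ‖) {w : E} (hw : ‖w‖ = 1) {δ : ℝ} (hδ : 0 < δ) :
    ∃ x : E, ‖x‖ ≤ 1 ∧ t < ψ x ∧ 2 - δ < ‖x + w‖ := by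
  rcases eq_or_ne ψ 0 with rfl | hψ
  · refine ⟨w, hw.le, by simpa using ht, ?_⟩
    rw [← two_smul ℝ w, norm_smul, hw]
    norm_num [hδ]
  have hψpos : 0 < ‖ψ‖ := norm_pos_iff.2 hψ
  set f : StrongDual ℝ E := ‖ψ‖⁻¹ • ψ
  have hf : ‖f‖ = 1 := by
    rw [norm_smul, norm_inv, norm_norm, inv_mul_cancel₀ hψpos.ne']
  have hw0 : w ≠ 0 := norm_ne_zero_iff.1 (by rw [hw]; norm_num)
  have hf0 : f ≠ 0 := norm_ne_zero_iff.1 (by rw [hf]; norm_num)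
  set T := f.smulRight w
  have hnormT : ‖ContinuousLinearMap.id ℝ E + T‖ = 2 := by
    rw [hE T ⟨f, w, hf0, hw0, rfl⟩, ContinuousLinearMap.norm_smulRight_apply, hf, hw]
    norm_num
  set η := min (δ / 2) (1 - t / ‖ψ‖)
  have hη : 0 < η := lt_min (by linarith) (by rw [sub_pos, div_lt_one hψpos]; exact ht)
  obtain ⟨x₁, hx₁, hTx₁⟩ :=
    (ContinuousLinearMap.id ℝ E + T).exists_lt_apply_of_lt_opNorm (r := 2 - η) (by linarith)
  -- `Id + T` commutes with `-Id`, so we may assume `f x ≥ 0`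
  obtain ⟨x, hx, hfx, hTx⟩ : ∃ x : E, ‖x‖ ≤ 1 ∧ 0 ≤ f x ∧ 2 - η < ‖x + f x • w‖ := by
    rcases le_total 0 (f x₁) with h | h
    · exact ⟨x₁, hx₁.le, h, hTx₁⟩
    · refine ⟨-x₁, by rw [norm_neg]; exact hx₁.le, by simpa using h, ?_⟩
      rwa [map_neg, neg_smul, ← neg_add, norm_neg]
  have hfx_le : f x ≤ 1 := (f.apply_le_norm_of_opNorm_le_one hf.le x).trans hx
  have hfx_gt : 1 - η < f x := by
    have := norm_add_le x (f x • w)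
    rw [norm_smul, hw, mul_one, Real.norm_of_nonneg hfx] at this
    linarith
  refine ⟨x, hx, ?_, ?_⟩
  · have hψx : ψ x = ‖ψ‖ * f x := by simp [f, hψpos.ne']
    have : t / ‖ψ‖ < f x := by linarith [min_le_right (δ / 2) (1 - t / ‖ψ‖)]
    rw [hψx]
    rwa [div_lt_iff₀' hψpos] at this
  · have hsplit : x + w = (x + f x • w) + (1 - f x) • w := by module
    have := norm_sub_norm_le (x + f x • w) (-((1 - f x) • w))
    rw [norm_neg, sub_neg_eq_add, ← hsplit, norm_smul, hw, mul_one,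
      Real.norm_of_nonneg (by linarith)] at this
    linarith [min_le_left (δ / 2) (1 - t / ‖ψ‖)]

theorem exists_norm_add_gt (hE : DaugavetProperty E) (ψ : StrongDual ℝ E) {t : ℝ} {x₀ : E}
    (ht : t < ψ x₀) (w : E) {δ : ℝ} (hδ : 0 < δ) :
    ∃ x : E, ‖x‖ ≤ ‖x₀‖ ∧ t < ψ x ∧ ‖x‖ + ‖w‖ - δ < ‖x + w‖ := by
  obtain rfl | hx₀ := eq_or_ne x₀ 0
  · exact ⟨0, le_rfl, ht, by simpa using hδ⟩
  obtain rfl | hw := eq_or_ne w 0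
  · exact ⟨x₀, le_rfl, ht, by simpa using hδ⟩
  set R := ‖x₀‖
  set s := ‖w‖
  have hR : 0 < R := norm_pos_iff.2 hx₀
  have hs : 0 < s := norm_pos_iff.2 hw
  have htR : t / R < ‖ψ‖ := by
    rw [div_lt_iff₀ hR]
    exact ht.trans_le ((le_abs_self _).trans (by simpa [mul_comm] using ψ.le_opNorm x₀))
  have hw₁ : ‖s⁻¹ • w‖ = 1 := by rw [norm_smul, norm_inv, norm_norm, inv_mul_cancel₀ hs.ne']
  obtain ⟨x₁, hx₁, htx₁, hx₁w⟩ :=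
    hE.exists_norm_add_gt_two_sub ψ htR hw₁ (δ := δ / (R + s)) (by positivity)
  refine ⟨R • x₁, ?_, ?_, ?_⟩
  · rw [norm_smul_of_nonneg hR.le]
    exact mul_le_of_le_one_right hR.le hx₁
  · rw [map_smul, smul_eq_mul]
    rwa [div_lt_iff₀' hR] at htx₁
  · have hcomb := mul_norm_add_sub_one_le_norm_smul_add_smul hx₁ hw₁.le hR.le hs.le
    rw [smul_smul, mul_inv_cancel₀ hs.ne', one_smul] at hcomb
    have hδ' : (R + s) * (1 - δ / (R + s)) < (R + s) * (‖x₁ + s⁻¹ • w‖ - 1) :=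
      mul_lt_mul_of_pos_left (by linarith) (by positivity)
    rw [mul_sub, mul_div_cancel₀ _ (by positivity), mul_one] at hδ'
    have : ‖R • x₁‖ ≤ R := by
      rw [norm_smul_of_nonneg hR.le]; exact mul_le_of_le_one_right hR.le hx₁
    linarith

theorem exists_mem_slice_norm_fst_add_gt {Y : Type*} [NormedAddCommGroup Y] [NormedSpace ℝ Y]
    (hE : DaugavetProperty E)
    {p : ENNReal} [Fact (1 ≤ p)] {S : Set (WithLp p (E × Y))}
    (hS : IsSlice (closedBall 0 1) S) (w : E) {δ : ℝ} (hδ : 0 < δ) :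
    ∃ x ∈ S, ‖x.fst‖ + ‖w‖ - δ < ‖x.fst + w‖ := by
  obtain ⟨⟨x₀, hx₀⟩, φ, α, -, rfl⟩ := hS
  obtain ⟨hx₀A, hx₀c⟩ := hx₀
  set c := sSup (φ '' closedBall 0 1) - α
  set ψ : StrongDual ℝ E :=
    φ.comp ((WithLp.prodContinuousLinearEquiv p ℝ E Y).symm.toContinuousLinearMap.comp
      (ContinuousLinearMap.inl ℝ E Y))
  have hφ : ∀ e : E, φ (WithLp.toLp p (e, x₀.snd)) = φ x₀ + (ψ e - ψ x₀.fst) := by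
    intro e
    have : WithLp.toLp p (e, x₀.snd) = x₀ + WithLp.toLp p (e - x₀.fst, 0) := by
      rw [WithLp.ext_iff]; ext <;> simp
    rw [this, map_add, ← map_sub]
    rfl
  obtain ⟨e, he, hψe, hew⟩ := hE.exists_norm_add_gt ψ (t := c - φ x₀ + ψ x₀.fst)
    (by linarith) w hδ
  refine ⟨WithLp.toLp p (e, x₀.snd), ⟨?_, ?_⟩, hew⟩
  · rw [mem_closedBall_zero_iff] at hx₀A ⊢
    exact (WithLp.prod_norm_le_of_norm_le (x := WithLp.toLp p (e, x₀.snd)) he le_rfl).trans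
      hx₀A
  · rw [hφ]; linarith

end DaugavetProperty

theorem stmt15_general {E Y : Type*} [NormedAddCommGroup E] [NormedSpace ℝ E]
    [NormedAddCommGroup Y] [NormedSpace ℝ Y]
    (hE : DaugavetProperty E)
    (p : ENNReal) [Fact (1 ≤ p)] (a : E) (b : Y)
    (h : SCDPoint (Metric.closedBall (0 : WithLp p (E × Y)) 1)
      ((WithLp.equiv p (E × Y)).symm (a, b))) :
    a = 0 := by
  obtain ⟨-, V, hV, hdet⟩ := h
  by_contra ha
  obtain ⟨x, hxV, hx⟩ := exists_seq_norm_add_sum_ge V WithLp.fst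
    (fun n w _ hδ => hE.exists_mem_slice_norm_fst_add_gt (hV n) w hδ) (-a)
    (ε := ‖a‖ / 4) (by positivity)
  refine notMem_closure_convexHull_range x _ (r := ‖a‖ / 2) (by positivity) (fun n => ?_)
    (hdet (range x) ?_ fun n => ⟨x n, mem_range_self n, hxV n⟩)
  · obtain ⟨g, hg, hga, hgx⟩ := exists_dual_almost_norming_of_norm_add_sum_ge _ _ _ (hx n)
    refine ⟨g.comp (WithLp.fstL p ℝ E Y), ?_, fun i hi => ?_⟩
    · exact (g.opNorm_comp_le _).trans (mul_le_one₀ hg (norm_nonneg _) WithLp.norm_fstL_le_one)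
    · have := hgx i (Finset.mem_range.2 hi)
      simp only [norm_neg, map_neg] at hga
      show g a + ‖a‖ / 2 ≤ g (x i).fst
      linarith [norm_nonneg (x i).fst]
  · rintro _ ⟨n, rfl⟩
    exact (hV n).subset (hxV n)

/-- if `E` has the Daugavet property and `1 < p < ∞`, then any SCD point
`(a,b)` of the unit ball of `E ⊕_p Y` has `a = 0`. -/
theorem stmt15 {E Y : Type*} [NormedAddCommGroup E] [NormedSpace ℝ E] [CompleteSpace E]
    [NormedAddCommGroup Y] [NormedSpace ℝ Y] [CompleteSpace Y]
    (hE : DaugavetProperty E)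
    (p : ENNReal) [Fact (1 ≤ p)] (hp1 : 1 < p) (hp2 : p ≠ ⊤) (a : E) (b : Y)
    (h : SCDPoint (Metric.closedBall (0 : WithLp p (E × Y)) 1)
      ((WithLp.equiv p (E × Y)).symm (a, b))) :
    a = 0 :=
  stmt15_general hE p a b h
end
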